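/- arXiv:2405.19932 — 7 statements merged into one kernel-verified Lean document; each statement's English description precedes it below -/
import Mathlib

section
/- For any composition d = (d_1, ..., d_ℓ) of positive integers, the sum over all coarsenings α of d of the product over j of d_{i_j} / (α_1 + α_2 + ... + α_j) equals 1, where for a coarsening α = (d_1+...+d_{i_2-1}, d_{i_2}+...+d_{i_3-1}, ..., d_{i_k}+...+d_ℓ) the indices i_1 = 1 < i_2 < ... < i_k mark the start of each block. -/
namespace Stmt0Aux

/-- Partial sum of `d`. -/
def Dq (d : ℕ → ℕ) (L : ℕ) : ℚ := ∑ t ∈ Finset.range L, (d t : ℚ)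

/-- Next block start after `i` in `S`, defaulting to `L`. -/
def nxt (L : ℕ) (S : Finset ℕ) (i : ℕ) : ℕ :=
  WithTop.untopD L ((S.filter (fun j => i < j)).min)

def term (d : ℕ → ℕ) (L : ℕ) (S : Finset ℕ) : ℚ :=
  ∏ i ∈ S, (d i : ℚ) / Dq d (nxt L S i)

def P (L : ℕ) : Finset (Finset ℕ) :=
  (Finset.range L).powerset.filter (fun S => 0 ∈ S)

lemma Dq_pos (d : ℕ → ℕ) (L : ℕ) (h0 : 0 < d 0) (hL : 0 < L) : 0 < Dq d L := by
  refine Finset.sum_pos' (fun i _ => by positivity) ⟨0, Finset.mem_range.2 hL, by exact_mod_cast h0⟩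

lemma nxt_max (L : ℕ) (S : Finset ℕ) (hS : S.Nonempty) :
    nxt L S (S.max' hS) = L := by
  have h : S.filter (fun j => S.max' hS < j) = ∅ := by
    refine Finset.filter_false_of_mem (fun j hj => ?_)
    exact not_lt.2 (S.le_max' j hj)
  rw [nxt, h, Finset.min_empty]
  rfl

lemma nxt_of_lt_max (L L' : ℕ) (S : Finset ℕ) (hS : S.Nonempty) {i : ℕ}
    (hi : i < S.max' hS) : nxt L S i = nxt L' S i := by
  have hmem : S.max' hS ∈ S.filter (fun j => i < j) :=
    Finset.mem_filter.2 ⟨S.max'_mem hS, hi⟩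
  obtain ⟨b, hb⟩ := Finset.min_of_mem hmem
  rw [nxt, nxt, hb]
  rfl

lemma nxt_insert (ℓ : ℕ) (S : Finset ℕ) (hS : S ⊆ Finset.range ℓ) {i : ℕ} (hi : i < ℓ) :
    nxt (ℓ + 1) (insert ℓ S) i = nxt ℓ S i := by
  have hfe : (insert ℓ S).filter (fun j => i < j)
      = insert ℓ (S.filter (fun j => i < j)) := by
    rw [Finset.filter_insert, if_pos hi]
  rw [nxt, hfe, Finset.min_insert]
  rcases Finset.eq_empty_or_nonempty (S.filter (fun j => i < j)) with he | hne
  · rw [nxt, he, Finset.min_empty, inf_top_eq]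
    rfl
  · obtain ⟨b, hb⟩ := Finset.min_of_mem hne.choose_spec
    have hbmem : b ∈ S.filter (fun j => i < j) := Finset.mem_of_min hb
    have hblt : b < ℓ := Finset.mem_range.1 (hS (Finset.mem_filter.1 hbmem).1)
    rw [nxt, hb, inf_eq_right.2 (WithTop.coe_le_coe.2 hblt.le)]
    rfl

lemma nxt_insert_top (ℓ : ℕ) (S : Finset ℕ) (hS : S ⊆ Finset.range ℓ) :
    nxt (ℓ + 1) (insert ℓ S) ℓ = ℓ + 1 := by
  have h : (insert ℓ S).filter (fun j => ℓ < j) = ∅ := by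
    refine Finset.filter_false_of_mem (fun j hj => ?_)
    rcases Finset.mem_insert.1 hj with rfl | hj
    · exact lt_irrefl _
    · exact not_lt.2 (Finset.mem_range.1 (hS hj)).le
  rw [nxt, h, Finset.min_empty]
  rfl

lemma mem_P {L : ℕ} {S : Finset ℕ} : S ∈ P L ↔ S ⊆ Finset.range L ∧ 0 ∈ S := by
  simp [P]

lemma main (d : ℕ → ℕ) (h0 : 0 < d 0) :
    ∀ ℓ, 1 ≤ ℓ → ∑ S ∈ P ℓ, term d ℓ S = 1 := by
  refine Nat.le_induction ?_ ?_
  · -- base case ℓ = 1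
    have hP : P 1 = {{0}} := by decide
    have hn : nxt 1 ({0} : Finset ℕ) 0 = 1 := by decide
    have hD : Dq d 1 = (d 0 : ℚ) := by simp [Dq]
    rw [hP, Finset.sum_singleton, term, Finset.prod_singleton, hn, hD]
    exact div_self (by exact_mod_cast h0.ne')
  · intro ℓ hℓ IH
    have hDℓ : (0:ℚ) < Dq d ℓ := Dq_pos d ℓ h0 hℓ
    have hDℓ1 : (0:ℚ) < Dq d (ℓ+1) := Dq_pos d (ℓ+1) h0 (Nat.succ_pos ℓ)
    -- split according to whether ℓ ∈ S
    rw [← Finset.sum_filter_add_sum_filter_not (P (ℓ+1)) (fun S => ℓ ∈ S)]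
    -- the part without ℓ
    have hnot : (P (ℓ+1)).filter (fun S => ℓ ∉ S) = P ℓ := by
      ext S
      simp only [P, Finset.mem_filter, Finset.mem_powerset]
      constructor
      · rintro ⟨⟨hsub, h0S⟩, hℓS⟩
        refine ⟨fun x hx => ?_, h0S⟩
        have := Finset.mem_range.1 (hsub hx)
        rcases Nat.lt_succ_iff_lt_or_eq.1 this with h | rfl
        · exact Finset.mem_range.2 h
        · exact absurd hx hℓS
      · rintro ⟨hsub, h0S⟩
        refine ⟨⟨hsub.trans (Finset.range_subset_range.2 (Nat.le_succ ℓ)), h0S⟩,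
          fun hℓS => ?_⟩
        exact absurd (Finset.mem_range.1 (hsub hℓS)) (lt_irrefl ℓ)
    have key_not : ∀ S ∈ P ℓ, term d (ℓ+1) S = term d ℓ S * (Dq d ℓ / Dq d (ℓ+1)) := by
      intro S hS
      obtain ⟨hsub, h0S⟩ := mem_P.1 hS
      have hne : S.Nonempty := ⟨0, h0S⟩
      set M := S.max' hne with hM
      have hMmem : M ∈ S := S.max'_mem hne
      have heq : ∀ i ∈ S.erase M,
          (d i : ℚ) / Dq d (nxt (ℓ+1) S i) = (d i : ℚ) / Dq d (nxt ℓ S i) := by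
        intro i hi
        obtain ⟨hiM, hiS⟩ := Finset.mem_erase.1 hi
        rw [nxt_of_lt_max (ℓ+1) ℓ S hne (lt_of_le_of_ne (S.le_max' i hiS) hiM)]
      have hfac : (d M : ℚ) / Dq d (ℓ+1) = (d M : ℚ) / Dq d ℓ * (Dq d ℓ / Dq d (ℓ+1)) := by
        have h1 : Dq d ℓ ≠ 0 := hDℓ.ne'
        have h2 : Dq d (ℓ+1) ≠ 0 := hDℓ1.ne'
        field_simp
      rw [term, term, ← Finset.mul_prod_erase S _ hMmem, ← Finset.mul_prod_erase S _ hMmem,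
        Finset.prod_congr rfl heq, nxt_max (ℓ+1) S hne, nxt_max ℓ S hne, hfac]
      ring
    -- the part with ℓ
    have key_yes : ∑ S ∈ (P (ℓ+1)).filter (fun S => ℓ ∈ S), term d (ℓ+1) S
        = ∑ S ∈ P ℓ, term d ℓ S * ((d ℓ : ℚ) / Dq d (ℓ+1)) := by
      refine (Finset.sum_nbij' (fun S => insert ℓ S) (fun S => S.erase ℓ) ?_ ?_ ?_ ?_ ?_).symm
      · intro S hS
        obtain ⟨hsub, h0S⟩ := mem_P.1 hS
        refine Finset.mem_filter.2 ⟨mem_P.2 ⟨?_, Finset.mem_insert_of_mem h0S⟩,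
          Finset.mem_insert_self ℓ S⟩
        exact Finset.insert_subset (Finset.self_mem_range_succ ℓ)
          (hsub.trans (Finset.range_subset_range.2 (Nat.le_succ ℓ)))
      · intro S hS
        obtain ⟨hS', hℓS⟩ := Finset.mem_filter.1 hS
        obtain ⟨hsub, h0S⟩ := mem_P.1 hS'
        refine mem_P.2 ⟨?_, ?_⟩
        · intro x hx
          obtain ⟨hxℓ, hxS⟩ := Finset.mem_erase.1 hx
          have := Finset.mem_range.1 (hsub hxS)
          exact Finset.mem_range.2 (lt_of_le_of_ne (Nat.lt_succ_iff.1 this) hxℓ)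
        · exact Finset.mem_erase.2 ⟨fun h => by omega, h0S⟩
      · intro S hS
        obtain ⟨hsub, h0S⟩ := mem_P.1 hS
        have hℓS : ℓ ∉ S := fun h => lt_irrefl ℓ (Finset.mem_range.1 (hsub h))
        exact Finset.erase_insert hℓS
      · intro S hS
        exact Finset.insert_erase (Finset.mem_filter.1 hS).2
      · intro S hS
        obtain ⟨hsub, h0S⟩ := mem_P.1 hS
        have hℓS : ℓ ∉ S := fun h => lt_irrefl ℓ (Finset.mem_range.1 (hsub h))
        have hp : ∏ i ∈ S, (d i : ℚ) / Dq d (nxt (ℓ+1) (insert ℓ S) i) = term d ℓ S :=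
          Finset.prod_congr rfl (fun i hi => by
            rw [nxt_insert ℓ S hsub (Finset.mem_range.1 (hsub hi))])
        symm
        rw [term, Finset.prod_insert hℓS, nxt_insert_top ℓ S hsub, hp]
        ring
    rw [key_yes, hnot, Finset.sum_congr rfl key_not, ← Finset.sum_mul, ← Finset.sum_mul,
      IH, one_mul, one_mul, ← add_div]
    have : (d ℓ : ℚ) + Dq d ℓ = Dq d (ℓ+1) := by
      rw [Dq, Dq, Finset.sum_range_succ]; ring
    rw [this]
    exact div_self hDℓ1.ne'

end Stmt0Aux

/-- For a composition `d = (d 0, ..., d (ℓ-1))` of positive integers, the sum over all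
coarsenings (encoded by the set `S` of block-start indices, which must contain `0`)
of the product over block starts `i` of `d i / (α_1 + ... + α_j)`, where
`α_1 + ... + α_j = d 0 + ... + d (next-1)` and `next` is the next block start
(or `ℓ` for the last block), equals `1`. -/
theorem stmt0 (ℓ : ℕ) (hℓ : 0 < ℓ) (d : ℕ → ℕ) (hd : ∀ i < ℓ, 0 < d i) :
    ∑ S ∈ (Finset.range ℓ).powerset.filter (fun S => 0 ∈ S),
      ∏ i ∈ S, (d i : ℚ) /
        (∑ t ∈ Finset.range (WithTop.untopD ℓ ((S.filter (fun j => i < j)).min)), (d t : ℚ)) = 1 := by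
  exact Stmt0Aux.main d (hd 0 hℓ) ℓ hℓ
end

section
/- For a composition d = (d_1, ..., d_ℓ) of positive integers, the q-analog identity holds: the sum over all coarsenings α of d of the product over j of q^{α_1+...+α_{j-1}} · [d_{i_j}]_q / [α_1+...+α_j]_q equals 1, where [m]_q = 1 + q + q² + ... + q^{m-1} and the indices i_j mark the start of each block of the coarsening. -/
noncomputable def qi (m : ℕ) : RatFunc ℚ := ∑ r ∈ Finset.range m, (RatFunc.X : RatFunc ℚ) ^ r

lemma qi_ne_zero {m : ℕ} (hm : 0 < m) : qi m ≠ 0 := by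
  have h : qi m = algebraMap (Polynomial ℚ) (RatFunc ℚ)
      (∑ r ∈ Finset.range m, Polynomial.X ^ r) := by
    simp [qi, map_sum, map_pow, RatFunc.algebraMap_X]
  rw [h]
  apply RatFunc.algebraMap_ne_zero
  intro h0
  have := congrArg (Polynomial.eval 1) h0
  simp [Polynomial.eval_finset_sum] at this
  omega

lemma qi_add (a b : ℕ) : qi (a + b) = qi a + (RatFunc.X : RatFunc ℚ) ^ a * qi b := by
  rw [qi, Finset.sum_range_add]
  simp [qi, pow_add, Finset.mul_sum]

lemma part2 (d : ℕ → ℕ) (n m : ℕ) (hn : 0 < n) :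
    ∑ S ∈ ((Finset.range (n+1)).powerset.filter (fun S => 0 ∈ S)).filter (fun S => n ∈ S),
      ∏ i ∈ S,
        ((RatFunc.X : RatFunc ℚ) ^ (∑ t ∈ Finset.range i, d t) * qi (d i))
          / qi (∑ t ∈ Finset.range (((S.filter (fun j => i < j)).min).untopD m), d t)
    = ((RatFunc.X : RatFunc ℚ) ^ (∑ t ∈ Finset.range n, d t) * qi (d n)
          / qi (∑ t ∈ Finset.range m, d t)) *
      ∑ T ∈ (Finset.range n).powerset.filter (fun S => 0 ∈ S),
        ∏ i ∈ T,
          ((RatFunc.X : RatFunc ℚ) ^ (∑ t ∈ Finset.range i, d t) * qi (d i))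
            / qi (∑ t ∈ Finset.range (((T.filter (fun j => i < j)).min).untopD n), d t) := by
  rw [Finset.mul_sum]
  apply Finset.sum_nbij' (i := fun S => S.erase n) (j := fun T => insert n T)
  · intro S hS
    simp only [Finset.mem_filter, Finset.mem_powerset] at hS ⊢
    obtain ⟨⟨hsub, h0⟩, hnS⟩ := hS
    refine ⟨fun x hx => ?_, Finset.mem_erase.2 ⟨by omega, h0⟩⟩
    rw [Finset.mem_erase] at hx
    have := hsub hx.2
    simp only [Finset.mem_range] at this ⊢
    omega
  · intro T hT
    simp only [Finset.mem_filter, Finset.mem_powerset] at hT ⊢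
    obtain ⟨hsub, h0⟩ := hT
    refine ⟨⟨?_, ?_⟩, Finset.mem_insert_self _ _⟩
    · intro x hx
      rcases Finset.mem_insert.1 hx with h | h
      · simp [h]
      · have := hsub h; simp only [Finset.mem_range] at this ⊢; omega
    · exact Finset.mem_insert_of_mem h0
  · intro S hS
    simp only [Finset.mem_filter] at hS
    exact Finset.insert_erase hS.2
  · intro T hT
    simp only [Finset.mem_filter, Finset.mem_powerset] at hT
    apply Finset.erase_insert
    intro hnT
    have := hT.1 hnT
    simp at this
  · intro S hS
    simp only [Finset.mem_filter, Finset.mem_powerset] at hS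
    obtain ⟨⟨hsub, h0⟩, hnS⟩ := hS
    have hSmem : ∀ x ∈ S, x ≤ n := by
      intro x hx; have := hsub hx; simp only [Finset.mem_range] at this; omega
    -- split off factor at n
    have hins : S = insert n (S.erase n) := (Finset.insert_erase hnS).symm
    rw [hins, Finset.prod_insert (Finset.notMem_erase _ _)]
    congr 1
    · -- factor at n
      have hfil : (insert n (S.erase n)).filter (fun j => n < j) = ∅ := by
        rw [← hins]
        apply Finset.filter_eq_empty_iff.2
        intro j hj
        exact not_lt.2 (hSmem j hj)
      rw [hfil, Finset.min_empty, WithTop.untopD_top]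
    · -- remaining factors
      rw [Finset.erase_insert (Finset.notMem_erase _ _)]
      apply Finset.prod_congr rfl
      intro i hi
      have hiS : i ∈ S := Finset.mem_of_mem_erase hi
      have hin : i < n := lt_of_le_of_ne (hSmem i hiS) (Finset.ne_of_mem_erase hi)
      congr 2
      have hfil : (insert n (S.erase n)).filter (fun j => i < j)
          = insert n ((S.erase n).filter (fun j => i < j)) := by
        rw [Finset.filter_insert, if_pos hin]
      rw [hfil, Finset.min_insert]
      cases h : ((S.erase n).filter (fun j => i < j)).min with
      | top =>
        rw [min_eq_left le_top]
        rfl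
      | coe b =>
        have hb : b ∈ (S.erase n).filter (fun j => i < j) := Finset.mem_of_min h
        have hbn : b < n := by
          simp only [Finset.mem_filter, Finset.mem_erase] at hb
          exact lt_of_le_of_ne (hSmem b hb.1.2) hb.1.1
        rw [min_def]
        simp only [WithTop.coe_le_coe]
        rw [if_neg (by omega)]
        rfl

lemma key (d : ℕ → ℕ) (hd0 : 0 < d 0) :
    ∀ ℓ, 0 < ℓ → ∀ m, ℓ ≤ m →
    ∑ S ∈ (Finset.range ℓ).powerset.filter (fun S => 0 ∈ S),
      ∏ i ∈ S,
        ((RatFunc.X : RatFunc ℚ) ^ (∑ t ∈ Finset.range i, d t) * qi (d i))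
          / qi (∑ t ∈ Finset.range (((S.filter (fun j => i < j)).min).untopD m), d t)
      = qi (∑ t ∈ Finset.range ℓ, d t) / qi (∑ t ∈ Finset.range m, d t) := by
  have hDpos : ∀ k, 0 < k → 0 < ∑ t ∈ Finset.range k, d t := by
    intro k hk
    exact Finset.sum_pos' (fun i _ => Nat.zero_le _) ⟨0, Finset.mem_range.2 hk, hd0⟩
  intro ℓ
  induction ℓ with
  | zero => intro h; omega
  | succ n ih =>
    intro _ m hm
    rcases Nat.eq_zero_or_pos n with hn | hn
    · -- base case ℓ = 1
      subst hn
      have h1 : (Finset.range 1).powerset.filter (fun S => 0 ∈ S) = {{0}} := by decide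
      rw [h1]
      simp
      norm_num [Finset.filter_singleton]
    · -- inductive step
      rw [← Finset.sum_filter_add_sum_filter_not _ (fun S => n ∈ S)]
      have h1 : ((Finset.range (n+1)).powerset.filter (fun S => 0 ∈ S)).filter
          (fun S => ¬ n ∈ S) = (Finset.range n).powerset.filter (fun S => 0 ∈ S) := by
        ext S
        simp only [Finset.mem_filter, Finset.mem_powerset, Finset.subset_iff,
          Finset.mem_range]
        constructor
        · rintro ⟨⟨hsub, h0⟩, hnS⟩
          refine ⟨fun x hx => ?_, h0⟩
          have := hsub hx
          rcases Nat.lt_succ_iff_lt_or_eq.1 this with h | h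
          · exact h
          · subst h; exact absurd hx hnS
        · rintro ⟨hsub, h0⟩
          refine ⟨⟨fun x hx => Nat.lt_succ_of_lt (hsub hx), h0⟩, fun hn' => ?_⟩
          exact absurd (hsub hn') (lt_irrefl n)
      rw [h1, ih hn m (by omega), part2 d n m hn, ih hn n le_rfl,
        Finset.sum_range_succ, qi_add]
      have h2 : qi (∑ t ∈ Finset.range n, d t) ≠ 0 := qi_ne_zero (hDpos n hn)
      have h3 : qi (∑ t ∈ Finset.range m, d t) ≠ 0 := qi_ne_zero (hDpos m (by omega))
      field_simp
      ring

/-- The q-analog of the chain identity, in the field of rational functions ℚ(q)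
with `q = RatFunc.X`.  Coarsenings of `d` are encoded by the set `S` of block-start
indices (containing `0`); for a block start `i`, `α_1 + ... + α_{j-1} = ∑_{t<i} d t`
and `α_1 + ... + α_j = ∑_{t < next} d t` where `next` is the next block start
(or `ℓ`), and `[m]_q = ∑_{r<m} q^r`. -/
theorem stmt2 (ℓ : ℕ) (hℓ : 0 < ℓ) (d : ℕ → ℕ) (hd : ∀ i < ℓ, 0 < d i) :
    ∑ S ∈ (Finset.range ℓ).powerset.filter (fun S => 0 ∈ S),
      ∏ i ∈ S,
        ((RatFunc.X : RatFunc ℚ) ^ (∑ t ∈ Finset.range i, d t)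
            * (∑ r ∈ Finset.range (d i), (RatFunc.X : RatFunc ℚ) ^ r))
          / (∑ r ∈ Finset.range
                (∑ t ∈ Finset.range (WithTop.untopD ℓ ((S.filter (fun j => i < j)).min)), d t),
              (RatFunc.X : RatFunc ℚ) ^ r) = 1 := by
  have hd0 : 0 < d 0 := hd 0 hℓ
  have h := key d hd0 ℓ hℓ ℓ le_rfl
  simp only [qi] at h
  rw [h]
  apply div_self
  have : 0 < ∑ t ∈ Finset.range ℓ, d t :=
    Finset.sum_pos' (fun i _ => Nat.zero_le _) ⟨0, Finset.mem_range.2 hℓ, hd0⟩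
  have := qi_ne_zero this
  simpa [qi] using this
end

section
/- Let d = (d_1, ..., d_ℓ) be a composition of positive integers with total sum n. Then the sum over all compositions β of ℓ (equivalently, over all coarsenings of d, with blocks determined by β) of |LinearExtensions(β, d)| · (product over j of d_{i_j}) equals n!, where LinearExtensions(β, d) is the set of linear extensions of the β-tree, and the number of linear extensions of the β-tree equals n! divided by the product over j = 1..k of (α_1 + ... + α_j), with α the coarsening of d determined by β. -/
open Finset

private lemma aux_key (L : ℕ) (e : ℕ → ℚ) (he : ∀ i < L, 0 < e i) :
    ∀ m, m ≤ L →
      ∑ S ∈ (range m).powerset.filter (fun S => 0 ∈ S ∨ m = 0),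
        ∏ i ∈ S, e i / ∑ t ∈ range (((S.filter (fun j => i < j)).min).untopD m), e t = 1 := by
  intro m
  induction m using Nat.strong_induction_on with
  | _ m IH =>
    intro hmL
    rcases Nat.eq_zero_or_pos m with rfl | hm
    · simp
    -- fiberwise over max
    have hmap : ∀ S ∈ (range m).powerset.filter (fun S => 0 ∈ S ∨ m = 0),
        (S.max).unbotD 0 ∈ range m := by
      intro S hS
      rw [mem_filter, mem_powerset] at hS
      have h0 : 0 ∈ S := hS.2.resolve_right hm.ne'
      obtain ⟨M, hM⟩ := Finset.max_of_nonempty ⟨0, h0⟩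
      rw [hM, WithBot.unbotD_coe]
      exact hS.1 (Finset.mem_of_max hM)
    rw [← Finset.sum_fiberwise_of_maps_to hmap]
    have hp : (0:ℚ) < ∑ t ∈ range m, e t := by
      apply Finset.sum_pos
      · intro t ht; exact he t (lt_of_lt_of_le (mem_range.mp ht) hmL)
      · exact Finset.nonempty_range_iff.mpr hm.ne'
    have inner : ∀ m' ∈ range m,
        (∑ S ∈ ((range m).powerset.filter (fun S => 0 ∈ S ∨ m = 0)).filter
            (fun S => (S.max).unbotD 0 = m'),
          ∏ i ∈ S, e i / ∑ t ∈ range (((S.filter (fun j => i < j)).min).untopD m), e t)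
        = e m' / (∑ t ∈ range m, e t) := by
      intro m' hm'
      have hm'm : m' < m := mem_range.mp hm'
      have step : (∑ S ∈ ((range m).powerset.filter (fun S => 0 ∈ S ∨ m = 0)).filter
            (fun S => (S.max).unbotD 0 = m'),
          ∏ i ∈ S, e i / ∑ t ∈ range (((S.filter (fun j => i < j)).min).untopD m), e t)
        = ∑ S' ∈ (range m').powerset.filter (fun S' => 0 ∈ S' ∨ m' = 0),
            (e m' / (∑ t ∈ range m, e t)) *
            ∏ i ∈ S', e i / ∑ t ∈ range (((S'.filter (fun j => i < j)).min).untopD m'), e t := by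
        apply Finset.sum_nbij' (i := fun S => S.erase m') (j := fun S' => insert m' S')
        · -- hi
          intro S hS
          simp only [mem_filter, mem_powerset] at hS ⊢
          obtain ⟨⟨hsub, h0⟩, hmax⟩ := hS
          have h0' : 0 ∈ S := h0.resolve_right hm.ne'
          obtain ⟨M, hM⟩ := Finset.max_of_nonempty (⟨0, h0'⟩ : S.Nonempty)
          rw [hM, WithBot.unbotD_coe] at hmax
          rw [hmax] at hM
          clear hmax
          constructor
          · intro j hj
            rw [mem_erase] at hj
            have := Finset.le_max hj.2
            rw [hM, WithBot.coe_le_coe] at this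
            exact mem_range.mpr (lt_of_le_of_ne this hj.1)
          · rcases Nat.eq_zero_or_pos m' with rfl | hm'0
            · exact Or.inr rfl
            · exact Or.inl (mem_erase.mpr ⟨hm'0.ne, h0'⟩)
        · -- hj
          intro S' hS'
          simp only [mem_filter, mem_powerset] at hS' ⊢
          obtain ⟨hsub, h0⟩ := hS'
          have hS'lt : ∀ j ∈ S', j < m' := fun j hj => mem_range.mp (hsub hj)
          refine ⟨⟨?_, ?_⟩, ?_⟩
          · intro j hj
            rcases mem_insert.mp hj with rfl | hj
            · exact mem_range.mpr hm'm
            · exact mem_range.mpr ((hS'lt j hj).trans hm'm)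
          · rcases h0 with h0 | rfl
            · exact Or.inl (mem_insert_of_mem h0)
            · exact Or.inl (mem_insert_self 0 S')
          · have hmax' : (insert m' S').max = (m' : WithBot ℕ) := by
              apply le_antisymm
              · apply Finset.max_le
                intro a ha
                rcases mem_insert.mp ha with rfl | ha
                · exact le_rfl
                · exact WithBot.coe_le_coe.mpr (hS'lt a ha).le
              · exact Finset.le_max (mem_insert_self _ _)
            rw [hmax']
            rfl
        · -- left_inv
          intro S hS
          simp only [mem_filter, mem_powerset] at hS
          obtain ⟨⟨hsub, h0⟩, hmax⟩ := hS
          have h0' : 0 ∈ S := h0.resolve_right hm.ne'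
          obtain ⟨M, hM⟩ := Finset.max_of_nonempty (⟨0, h0'⟩ : S.Nonempty)
          rw [hM, WithBot.unbotD_coe] at hmax
          rw [hmax] at hM
          clear hmax
          exact Finset.insert_erase (Finset.mem_of_max hM)
        · -- right_inv
          intro S' hS'
          simp only [mem_filter, mem_powerset] at hS'
          exact Finset.erase_insert (fun h => absurd (mem_range.mp (hS'.1 h)) (lt_irrefl m'))
        · -- h : value equality
          intro S hS
          simp only [mem_filter, mem_powerset] at hS
          obtain ⟨⟨hsub, h0⟩, hmax⟩ := hS
          have h0' : 0 ∈ S := h0.resolve_right hm.ne'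
          obtain ⟨M, hM⟩ := Finset.max_of_nonempty (⟨0, h0'⟩ : S.Nonempty)
          rw [hM, WithBot.unbotD_coe] at hmax
          rw [hmax] at hM
          clear hmax
          have hm'S : m' ∈ S := Finset.mem_of_max hM
          have hSlt : ∀ j ∈ S.erase m', j < m' := by
            intro j hj
            rw [mem_erase] at hj
            have := Finset.le_max hj.2
            rw [hM, WithBot.coe_le_coe] at this
            exact lt_of_le_of_ne this hj.1
          -- rewrite S as insert m' (S.erase m')
          conv_lhs => rw [← Finset.insert_erase hm'S]
          set S' := S.erase m' with hS'def
          have hnm : m' ∉ S' := Finset.notMem_erase m' S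
          rw [Finset.prod_insert hnm]
          congr 1
          · -- factor at m'
            congr 1
            have hfe : (insert m' S').filter (fun j => m' < j) = ∅ := by
              rw [Finset.filter_eq_empty_iff]
              intro j hj
              rcases mem_insert.mp hj with rfl | hj
              · exact lt_irrefl j
              · exact not_lt.mpr (hSlt j hj).le
            rw [hfe, Finset.min_empty, WithTop.untopD_top]
          · -- remaining product
            apply Finset.prod_congr rfl
            intro i hi
            have him' : i < m' := hSlt i hi
            congr 2
            have hfi : (insert m' S').filter (fun j => i < j)
                = insert m' (S'.filter (fun j => i < j)) := by
              rw [Finset.filter_insert, if_pos him']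
            rw [hfi, Finset.min_insert]
            rcases (S'.filter (fun j => i < j)).eq_empty_or_nonempty with hT | hT
            · rw [hT, Finset.min_empty]
              norm_num
              rfl
            · obtain ⟨v, hv⟩ := Finset.min_of_nonempty hT
              have hvS : v ∈ S'.filter (fun j => i < j) := Finset.mem_of_min hv
              have hvlt : v < m' := hSlt v (Finset.mem_filter.mp hvS).1
              rw [hv]
              rw [min_comm, min_eq_left (by exact_mod_cast hvlt.le)]
              rfl
      rw [step, ← Finset.mul_sum, IH m' hm'm (hm'm.le.trans hmL), mul_one]
    rw [Finset.sum_congr rfl inner, ← Finset.sum_div, div_self hp.ne']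


/-- Summing, over all coarsenings of `d` (encoded by the set `S` of block starts,
with `0 ∈ S`), the number of linear extensions of the β-tree,
`n! / ∏_j (α_1 + ... + α_j)`, times the product of the weights `d i` of the
block starts, gives `n!`, where `n = d 0 + ... + d (ℓ-1)`.  The identity is
stated in ℚ. -/
theorem stmt3 (ℓ : ℕ) (hℓ : 0 < ℓ) (d : ℕ → ℕ) (hd : ∀ i < ℓ, 0 < d i) :
    ∑ S ∈ (Finset.range ℓ).powerset.filter (fun S => 0 ∈ S),
      ((Nat.factorial (∑ t ∈ Finset.range ℓ, d t) : ℚ) /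
          ∏ i ∈ S,
            (∑ t ∈ Finset.range (((S.filter (fun j => i < j)).min).untopD ℓ), (d t : ℚ)))
        * ∏ i ∈ S, (d i : ℚ)
      = (Nat.factorial (∑ t ∈ Finset.range ℓ, d t) : ℚ) := by
  have key := aux_key ℓ (fun i => (d i : ℚ)) (fun i hi => Nat.cast_pos.mpr (hd i hi)) ℓ le_rfl
  have hfil : (Finset.range ℓ).powerset.filter (fun S => 0 ∈ S ∨ ℓ = 0)
      = (Finset.range ℓ).powerset.filter (fun S => 0 ∈ S) := by
    apply Finset.filter_congr
    intro S _
    simp [hℓ.ne']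
  rw [hfil] at key
  calc ∑ S ∈ (Finset.range ℓ).powerset.filter (fun S => 0 ∈ S),
      ((Nat.factorial (∑ t ∈ Finset.range ℓ, d t) : ℚ) /
          ∏ i ∈ S,
            (∑ t ∈ Finset.range (((S.filter (fun j => i < j)).min).untopD ℓ), (d t : ℚ)))
        * ∏ i ∈ S, (d i : ℚ)
      = ∑ S ∈ (Finset.range ℓ).powerset.filter (fun S => 0 ∈ S),
        (Nat.factorial (∑ t ∈ Finset.range ℓ, d t) : ℚ) *
          ∏ i ∈ S, ((d i : ℚ) /
            ∑ t ∈ Finset.range (((S.filter (fun j => i < j)).min).untopD ℓ), (d t : ℚ)) := by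
        apply Finset.sum_congr rfl
        intro S _
        rw [Finset.prod_div_distrib, div_mul_eq_mul_div, mul_div_assoc]
    _ = (Nat.factorial (∑ t ∈ Finset.range ℓ, d t) : ℚ) := by
        rw [← Finset.mul_sum, key, mul_one]
end

section
/- For a composition d = (d_1, ..., d_ℓ) and each j with block-start index i_j in a coarsening α of d, the quantity n! / ∏_{j=1}^k (α_1 + ... + α_j) is always a positive integer, where n = d_1 + ... + d_ℓ. -/
/-- For any coarsening of the composition `d` (encoded by its set `S` of block-start
indices, with `0 ∈ S ⊆ {0,...,ℓ-1}`), the product of the partial sums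
`α_1 + ... + α_j = ∑_{t < next block start} d t` divides `n!` where
`n = d 0 + ... + d (ℓ-1)`. -/
theorem stmt4 (ℓ : ℕ) (hℓ : 0 < ℓ) (d : ℕ → ℕ) (hd : ∀ i < ℓ, 0 < d i)
    (S : Finset ℕ) (hS : S ⊆ Finset.range ℓ) (h0 : 0 ∈ S) :
    (∏ i ∈ S, ∑ t ∈ Finset.range (((S.filter (fun j => i < j)).min).untopD ℓ), d t)
      ∣ Nat.factorial (∑ t ∈ Finset.range ℓ, d t) := by
  classical
  set n := ∑ t ∈ Finset.range ℓ, d t with hn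
  set nxt : ℕ → ℕ := fun i => ((S.filter (fun j => i < j)).min).untopD ℓ with hnxt
  set P : ℕ → ℕ := fun m => ∑ t ∈ Finset.range m, d t with hP
  have hnxt_gt : ∀ i ∈ S, i < nxt i := by
    intro i hi
    rcases (S.filter (fun j => i < j)).eq_empty_or_nonempty with h | h
    · simp only [hnxt, h, Finset.min_empty, WithTop.untopD_top]
      exact Finset.mem_range.mp (hS hi)
    · obtain ⟨m, hm⟩ := Finset.min_of_nonempty h
      have hmem := Finset.mem_of_min hm
      simp only [hnxt, hm, WithTop.untopD_coe]
      exact (Finset.mem_filter.mp hmem).2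
  have hnxt_le : ∀ i, nxt i ≤ ℓ := by
    intro i
    rcases (S.filter (fun j => i < j)).eq_empty_or_nonempty with h | h
    · simp [hnxt, h]
    · obtain ⟨m, hm⟩ := Finset.min_of_nonempty h
      have hmem := Finset.mem_of_min hm
      have : m < ℓ := Finset.mem_range.mp (hS (Finset.mem_filter.mp hmem).1)
      simp only [hnxt, hm, WithTop.untopD_coe]
      omega
  have hnxt_min : ∀ i, ∀ j ∈ S, i < j → nxt i ≤ j := by
    intro i j hj hij
    have hjf : j ∈ S.filter (fun k => i < k) := Finset.mem_filter.mpr ⟨hj, hij⟩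
    obtain ⟨m, hm⟩ := Finset.min_of_mem hjf
    have hle : (m : WithTop ℕ) ≤ j := by have := Finset.min_le hjf; rwa [hm] at this
    simp only [hnxt, hm, WithTop.untopD_coe]
    exact_mod_cast hle
  -- strict monotonicity of partial sums up to ℓ
  have hPmono : ∀ a b, a < b → b ≤ ℓ → P a < P b := by
    intro a b hab hbl
    apply Finset.sum_lt_sum_of_subset (Finset.range_subset_range.mpr hab.le)
      (i := a) (Finset.mem_range.mpr hab) (by simp)
    · exact hd a (lt_of_lt_of_le hab hbl)
    · intro j _ _; exact Nat.zero_le _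
  have hPle : ∀ a b, a ≤ b → P a ≤ P b := by
    intro a b hab
    exact Finset.sum_le_sum_of_subset (Finset.range_subset_range.mpr hab)
  have hinj : ∀ i ∈ S, ∀ j ∈ S, P (nxt i) = P (nxt j) → i = j := by
    intro i hi j hj hpeq
    by_contra hne
    rcases Nat.lt_or_ge i j with h | h
    · have h1 : nxt i ≤ j := hnxt_min i j hj h
      have h2 : j < nxt j := hnxt_gt j hj
      exact absurd hpeq (Nat.ne_of_lt (hPmono _ _ (lt_of_le_of_lt h1 h2) (hnxt_le j)))
    · have hij : j < i := lt_of_le_of_ne h (Ne.symm hne)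
      have h1 : nxt j ≤ i := hnxt_min j i hi hij
      have h2 : i < nxt i := hnxt_gt i hi
      exact absurd hpeq.symm (Nat.ne_of_lt (hPmono _ _ (lt_of_le_of_lt h1 h2) (hnxt_le i)))
  have hmem : ∀ i ∈ S, P (nxt i) ∈ Finset.Icc 1 n := by
    intro i hi
    refine Finset.mem_Icc.mpr ⟨?_, hPle _ _ (hnxt_le i)⟩
    have h1 : 1 ≤ nxt i := Nat.succ_le_of_lt (Nat.lt_of_le_of_lt (Nat.zero_le i) (hnxt_gt i hi))
    have : P 0 < P (nxt i) := hPmono 0 (nxt i) h1 (hnxt_le i)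
    simpa [hP, Nat.one_le_iff_ne_zero, Nat.pos_iff_ne_zero] using this
  have key : (∏ i ∈ S, P (nxt i)) ∣ Nat.factorial n := by
    have himg : ∏ i ∈ S, P (nxt i) = ∏ m ∈ S.image (fun i => P (nxt i)), m :=
      (Finset.prod_image (f := fun m => m) (g := fun i => P (nxt i)) hinj).symm
    rw [himg, ← Finset.prod_Ico_id_eq_factorial]
    exact Finset.prod_dvd_prod_of_subset _ _ _
      (fun m hm => by obtain ⟨i, hi, rfl⟩ := Finset.mem_image.mp hm; rw [Finset.Ico_add_one_right_eq_Icc]; exact hmem i hi)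
  exact key
end

section
/- Let (P, ω, d) be a finite weighted labeled poset and a ∈ P with d(a) = d_1 + d_2 for positive integers d_1, d_2. Form P' by splitting a into two vertices a_- < a_+ each inheriting all relations of a, and define labelings ω' (with ω'(a_-) < ω'(a_+), both inserted at the position of ω(a), agreeing with ω elsewhere) and ω'' (with ω''(a_-) > ω''(a_+)), and weight d' with d'(a_-) = d_1, d'(a_+) = d_2, agreeing with d elsewhere. Then K^d_{(P,ω)}(x) = K^{d'}_{(P',ω')}(x) − K^{d'}_{(P',ω'')}(x). -/
open scoped Classical

/-- Splitting a vertex `a` of weight `d a = d1 + d2` into `a₋ < a₊` (here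
`a₋ = Sum.inl a` and `a₊ = Sum.inr ()`, each inheriting all relations of `a`),
with labelings `ω'` (where `ω'(a₋) < ω'(a₊)` are inserted at the position of
`ω a`) and `ω''` (where `ω''(a₋) > ω''(a₊)`), and weights `d'(a₋) = d1`,
`d'(a₊) = d2`:  `K^d_{(P,ω)} = K^{d'}_{(P',ω')} − K^{d'}_{(P',ω'')}`
in the variables `x_1, ..., x_N` for every `N`. -/
theorem stmt8 {P : Type*} [Fintype P] [PartialOrder P] [DecidableEq P]
    (ω : P → ℕ) (hinj : Function.Injective ω)
    (d : P → ℕ) (hd : ∀ v, 0 < d v)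
    (a : P) (d1 d2 : ℕ) (hd1 : 0 < d1) (hd2 : 0 < d2) (hsplit : d a = d1 + d2)
    (N : ℕ) :
    let r' : P ⊕ Unit → P ⊕ Unit → Prop := fun x y =>
      match x, y with
      | .inl x, .inl y => x ≤ y
      | .inl x, .inr _ => x ≤ a
      | .inr _, .inl y => a ≤ y ∧ a ≠ y
      | .inr _, .inr _ => True
    let ω' : P ⊕ Unit → ℕ := fun z =>
      match z with
      | .inl x => 2 * ω x
      | .inr _ => 2 * ω a + 1
    let ω'' : P ⊕ Unit → ℕ := fun z =>
      match z with
      | .inl x => if x = a then 2 * ω a + 1 else 2 * ω x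
      | .inr _ => 2 * ω a
    let d' : P ⊕ Unit → ℕ := fun z =>
      match z with
      | .inl x => if x = a then d1 else d x
      | .inr _ => d2
    (∑ f : P → Fin N,
        if (∀ x y : P, x ≤ y → f x ≤ f y ∧ (ω y < ω x → f x < f y)) then
          ∏ v : P, (MvPolynomial.X (f v) : MvPolynomial (Fin N) ℤ) ^ d v
        else 0)
      =
      (∑ f : P ⊕ Unit → Fin N,
        if (∀ x y, r' x y → f x ≤ f y ∧ (ω' y < ω' x → f x < f y)) then
          ∏ v, (MvPolynomial.X (f v) : MvPolynomial (Fin N) ℤ) ^ d' v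
        else 0)
      -
      (∑ f : P ⊕ Unit → Fin N,
        if (∀ x y, r' x y → f x ≤ f y ∧ (ω'' y < ω'' x → f x < f y)) then
          ∏ v, (MvPolynomial.X (f v) : MvPolynomial (Fin N) ℤ) ^ d' v
        else 0) := by
  intro r' ω' ω'' d'
  classical
  have hω : ∀ x y : P, x ≠ y → ω x ≠ ω y := fun x y h e => h (hinj e)
  -- abbreviations
  set A : (P ⊕ Unit → Fin N) → Prop :=
    fun f => ∀ x y, r' x y → f x ≤ f y ∧ (ω' y < ω' x → f x < f y) with hA_def
  set B : (P ⊕ Unit → Fin N) → Prop :=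
    fun f => ∀ x y, r' x y → f x ≤ f y ∧ (ω'' y < ω'' x → f x < f y) with hB_def
  set Q : (P → Fin N) → Prop :=
    fun g => ∀ x y : P, x ≤ y → g x ≤ g y ∧ (ω y < ω x → g x < g y) with hQ_def
  set p : (P ⊕ Unit → Fin N) → MvPolynomial (Fin N) ℤ :=
    fun f => ∏ v, (MvPolynomial.X (f v) : MvPolynomial (Fin N) ℤ) ^ d' v with hp_def
  -- key: B f ↔ A f ∧ f (inl a) < f (inr ())
  have hBA : ∀ f : P ⊕ Unit → Fin N, B f ↔ (A f ∧ f (.inl a) < f (.inr ())) := by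
    intro f
    constructor
    · intro hB
      refine ⟨?_, ?_⟩
      · rintro (x | ⟨⟩) (y | ⟨⟩) hr
        · obtain ⟨h1, h2⟩ := hB (.inl x) (.inl y) hr
          refine ⟨h1, fun hw => h2 ?_⟩
          simp only [ω', ω''] at hw ⊢
          by_cases hx : x = a <;> by_cases hy : y = a <;>
            simp [hx, hy] at hw ⊢ <;> omega
        · obtain ⟨h1, h2⟩ := hB (.inl x) (.inr ()) hr
          refine ⟨h1, fun hw => h2 ?_⟩
          simp only [ω', ω''] at hw ⊢
          by_cases hx : x = a <;> simp [hx] at hw ⊢ <;> omega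
        · obtain ⟨h1, h2⟩ := hB (.inr ()) (.inl y) hr
          refine ⟨h1, fun hw => h2 ?_⟩
          have hy : y ≠ a := fun h => hr.2 h.symm
          have := hω y a hy
          simp only [ω', ω''] at hw ⊢
          simp [hy] at hw ⊢ <;> omega
        · exact ⟨le_refl _, fun hw => by simp [ω'] at hw⟩
      · have := (hB (.inl a) (.inr ()) (le_refl a)).2
        apply this
        simp [ω'']
    · rintro ⟨hA, hlt⟩
      rintro (x | ⟨⟩) (y | ⟨⟩) hr
      · obtain ⟨h1, h2⟩ := hA (.inl x) (.inl y) hr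
        refine ⟨h1, fun hw => h2 ?_⟩
        simp only [ω', ω''] at hw ⊢
        split_ifs at hw
        all_goals try subst ‹y = a›
        all_goals try subst ‹x = a›
        all_goals try (have := hω y a (by assumption))
        all_goals try (have := hω y x (by assumption))
        all_goals omega
      · obtain ⟨h1, h2⟩ := hA (.inl x) (.inr ()) hr
        refine ⟨h1, fun hw => ?_⟩
        simp only [ω', ω''] at hw h2
        by_cases hx : x = a
        · subst hx; exact hlt
        · simp [hx] at hw h2; exact h2 (by omega)
      · obtain ⟨h1, h2⟩ := hA (.inr ()) (.inl y) hr
        refine ⟨h1, fun hw => ?_⟩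
        have hy : y ≠ a := fun h => hr.2 h.symm
        simp only [ω', ω''] at hw h2
        simp [hy] at hw h2
        exact h2 (by omega)
      · exact ⟨le_refl _, fun hw => by simp [ω''] at hw⟩
  -- key: A (Sum.elim g (fun _ => g a)) ↔ Q g
  have hAQ : ∀ g : P → Fin N, A (Sum.elim g (fun _ => g a)) ↔ Q g := by
    intro g
    constructor
    · intro h x y hxy
      obtain ⟨h1, h2⟩ := h (.inl x) (.inl y) hxy
      refine ⟨h1, fun hw => h2 ?_⟩
      simp only [ω']; omega
    · intro hQg
      rintro (x | ⟨⟩) (y | ⟨⟩) hr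
      · obtain ⟨h1, h2⟩ := hQg x y hr
        exact ⟨h1, fun hw => h2 (by simp only [ω'] at hw; omega)⟩
      · obtain ⟨h1, h2⟩ := hQg x a hr
        exact ⟨h1, fun hw => h2 (by simp only [ω'] at hw; omega)⟩
      · obtain ⟨h1, h2⟩ := hQg a y hr.1
        refine ⟨h1, fun hw => h2 ?_⟩
        have hy : y ≠ a := fun h => hr.2 h.symm
        have := hω y a hy
        simp only [ω'] at hw; omega
      · exact ⟨le_refl _, fun hw => by simp [ω'] at hw⟩
  -- product identity
  have hprod : ∀ g : P → Fin N, p (Sum.elim g (fun _ => g a)) =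
      ∏ v : P, (MvPolynomial.X (g v) : MvPolynomial (Fin N) ℤ) ^ d v := by
    intro g
    simp only [hp_def]
    rw [Fintype.prod_sum_type]
    simp only [Sum.elim_inl, Sum.elim_inr]
    have hu : (∏ _ : Unit, (MvPolynomial.X (g a) : MvPolynomial (Fin N) ℤ) ^ d' (.inr ()))
        = MvPolynomial.X (g a) ^ d2 := by
      simp [d']
    rw [hu]
    have : ∀ x : P, (MvPolynomial.X (g x) : MvPolynomial (Fin N) ℤ) ^ d x =
        MvPolynomial.X (g x) ^ d' (.inl x) *
          (if x = a then (MvPolynomial.X (g a) : MvPolynomial (Fin N) ℤ) ^ d2 else 1) := by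
      intro x
      by_cases hx : x = a
      · subst hx; rw [hsplit, pow_add]; simp [d']
      · simp [d', hx]
    calc (∏ x : P, (MvPolynomial.X (g x) : MvPolynomial (Fin N) ℤ) ^ d' (.inl x)) *
          MvPolynomial.X (g a) ^ d2
        = ∏ x : P, (MvPolynomial.X (g x) : MvPolynomial (Fin N) ℤ) ^ d' (.inl x) *
            (if x = a then (MvPolynomial.X (g a) : MvPolynomial (Fin N) ℤ) ^ d2 else 1) := by
          rw [Finset.prod_mul_distrib, Finset.prod_ite_eq' Finset.univ a
            (fun _ => (MvPolynomial.X (g a) : MvPolynomial (Fin N) ℤ) ^ d2)]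
          simp
      _ = ∏ v : P, (MvPolynomial.X (g v) : MvPolynomial (Fin N) ℤ) ^ d v := by
          exact Finset.prod_congr rfl fun x _ => (this x).symm
  -- split the A-sum
  have hsum : (∑ f : P ⊕ Unit → Fin N, if A f then p f else 0)
      = (∑ f : P ⊕ Unit → Fin N, if B f then p f else 0)
        + ∑ f : P ⊕ Unit → Fin N,
            if A f ∧ f (.inl a) = f (.inr ()) then p f else 0 := by
    rw [← Finset.sum_add_distrib]
    refine Finset.sum_congr rfl fun f _ => ?_
    by_cases hAf : A f
    · have hle : f (.inl a) ≤ f (.inr ()) := (hAf (.inl a) (.inr ()) (le_refl a)).1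
      by_cases hlt : f (.inl a) < f (.inr ())
      · rw [if_pos hAf, if_pos ((hBA f).2 ⟨hAf, hlt⟩),
          if_neg (fun h => hlt.ne h.2), add_zero]
      · have heq : f (.inl a) = f (.inr ()) := le_antisymm hle (not_lt.1 hlt)
        rw [if_pos hAf, if_neg (fun hB => hlt ((hBA f).1 hB).2),
          if_pos ⟨hAf, heq⟩, zero_add]
    · rw [if_neg hAf, if_neg (fun hB => hAf ((hBA f).1 hB).1),
        if_neg (fun h => hAf h.1), add_zero]
  rw [hsum, add_sub_cancel_left]
  -- compute the difference sum via the equivalence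
  let e : ((P → Fin N) × Fin N) ≃ (P ⊕ Unit → Fin N) :=
    { toFun := fun gv => Sum.elim gv.1 (fun _ => gv.2)
      invFun := fun f => (f ∘ Sum.inl, f (.inr ()))
      left_inv := fun gv => by ext <;> simp
      right_inv := fun f => by funext z; cases z with
        | inl x => simp
        | inr u => cases u; simp }
  rw [← Equiv.sum_comp e (fun f => if A f ∧ f (.inl a) = f (.inr ()) then p f else 0),
    Fintype.sum_prod_type]
  refine Finset.sum_congr rfl fun g _ => ?_
  have he : ∀ v : Fin N, e (g, v) = Sum.elim g (fun _ : Unit => v) := fun v => rfl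
  have hstep : ∀ v : Fin N,
      (if A (e (g, v)) ∧ e (g, v) (Sum.inl a) = e (g, v) (Sum.inr ())
          then p (e (g, v)) else 0)
      = if v = g a then
          (if Q g then ∏ w : P, (MvPolynomial.X (g w) : MvPolynomial (Fin N) ℤ) ^ d w else 0)
        else 0 := by
    intro v
    rw [he v]
    by_cases hv : v = g a
    · subst hv
      rw [if_pos rfl]
      by_cases hQg : Q g
      · rw [if_pos ⟨(hAQ g).2 hQg, rfl⟩, if_pos hQg, hprod g]
      · rw [if_neg (fun h => hQg ((hAQ g).1 h.1)), if_neg hQg]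
    · rw [if_neg, if_neg hv]
      rintro ⟨-, h⟩
      simp only [Sum.elim_inl, Sum.elim_inr] at h
      exact hv h.symm
  rw [Finset.sum_congr rfl fun v (_ : v ∈ Finset.univ) => hstep v,
    Finset.sum_ite_eq' Finset.univ (g a)]
  simp
  exact if_congr Iff.rfl rfl rfl
end

section
/- For any composition β = (β_1, ..., β_k) of n, the identity ∑_{α: refinements of β with α ≥ d, for a fixed composition d refining β} (∏_j d_{i_j}) / π(α, β) = 1 holds for each fixed composition d refining β, where the sum is over all compositions α with d ≤ α ≤ β, the indices i_j are the block-start positions of d in α, and π(α,β) = ∏ over parts of β of the partial sums of the corresponding block of α. -/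
open Finset

private def bb (B : Finset ℕ) (i : ℕ) : ℕ := WithBot.unbotD 0 ((B.filter (fun b => b ≤ i)).max)

private def nx (S : Finset ℕ) (ℓ i : ℕ) : ℕ := WithTop.untopD ℓ ((S.filter (fun j => i < j)).min)

private def trm (d : ℕ → ℕ) (B S : Finset ℕ) (ℓ : ℕ) : ℚ :=
  (∏ i ∈ S, (d i : ℚ)) / ∏ i ∈ S, (∑ t ∈ Finset.Ico (bb B i) (nx S ℓ i), (d t : ℚ))

-- bb doesn't see elements above i
private lemma bb_erase (B : Finset ℕ) (i ℓ : ℕ) (h : i < ℓ) :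
    bb (B.erase ℓ) i = bb B i := by
  unfold bb
  rw [Finset.filter_erase, Finset.erase_eq_of_notMem]
  simp only [mem_filter, not_and]
  intro _
  omega

-- bb when all elements are ≤ i
private lemma bb_all_le (B : Finset ℕ) (i : ℕ) (h : ∀ b ∈ B, b ≤ i) :
    bb B i = WithBot.unbotD 0 B.max := by
  unfold bb
  rw [Finset.filter_true_of_mem h]

-- nx after inserting a top element
private lemma nx_insert_top (S : Finset ℕ) (ℓ i : ℕ) (hS : ∀ j ∈ S, j < ℓ) (hi : i < ℓ) :
    nx (insert ℓ S) (ℓ + 1) i = nx S ℓ i := by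
  unfold nx
  rw [Finset.filter_insert, if_pos hi]
  rcases Finset.eq_empty_or_nonempty (S.filter (fun j => i < j)) with h | h
  · rw [h]
    rfl
  · obtain ⟨m, hm⟩ := Finset.min_of_nonempty h
    have hmS : m ∈ S := (Finset.mem_filter.mp (Finset.mem_of_min hm)).1
    have hmℓ : m < ℓ := hS m hmS
    rw [Finset.min_insert, hm]
    rw [← WithTop.coe_min, min_eq_right hmℓ.le]
    rfl

private lemma nx_top (S : Finset ℕ) (ℓ i : ℕ) (h : S.filter (fun j => i < j) = ∅) :
    nx S ℓ i = ℓ := by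
  unfold nx; rw [h]; rfl

private lemma nx_indep (S : Finset ℕ) (ℓ ℓ' i : ℕ) (h : (S.filter (fun j => i < j)).Nonempty) :
    nx S ℓ i = nx S ℓ' i := by
  obtain ⟨m, hm⟩ := Finset.min_of_nonempty h
  unfold nx
  rw [hm]
  rfl


private lemma key_s11 : ∀ ℓ : ℕ, 0 < ℓ → ∀ d : ℕ → ℕ, (∀ i < ℓ, 0 < d i) →
    ∀ B : Finset ℕ, B ⊆ Finset.range ℓ → 0 ∈ B →
    ∑ S ∈ (Finset.range ℓ).powerset.filter (fun S => B ⊆ S), trm d B S ℓ = 1 := by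
  intro ℓ
  induction ℓ with
  | zero => omega
  | succ ℓ IH =>
    intro _ d hd B hB h0
    rcases Nat.eq_zero_or_pos ℓ with h1 | h1
    · -- base case ℓ + 1 = 1
      subst h1
      have hB1 : B = {0} := by
        apply Finset.Subset.antisymm
        · intro x hx
          have := hB hx
          simpa using this
        · simpa using h0
      subst hB1
      have hset : (Finset.range 1).powerset.filter (fun S => ({0} : Finset ℕ) ⊆ S)
          = {({0} : Finset ℕ)} := by decide
      rw [hset, Finset.sum_singleton]
      have hd0 : (d 0 : ℚ) ≠ 0 := by
        have := hd 0 (by norm_num)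
        exact_mod_cast this.ne'
      unfold trm bb nx
      simp [Finset.filter_singleton, hd0]
    · -- inductive step, ℓ ≥ 1
      have hd' : ∀ i < ℓ, 0 < d i := fun i hi => hd i (by omega)
      by_cases hA : ℓ ∈ B
      · -- Case A : ℓ ∈ B
        have hbe : B.erase ℓ ⊆ Finset.range ℓ := by
          intro x hx
          have hx1 := Finset.mem_of_mem_erase hx
          have hx2 := Finset.ne_of_mem_erase hx
          have := hB hx1
          simp only [Finset.mem_range] at this ⊢
          omega
        have h0e : 0 ∈ B.erase ℓ := Finset.mem_erase.mpr ⟨by omega, h0⟩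
        rw [show (1 : ℚ) = ∑ S ∈ (Finset.range ℓ).powerset.filter
            (fun S => B.erase ℓ ⊆ S), trm d (B.erase ℓ) S ℓ from
          (IH h1 d hd' (B.erase ℓ) hbe h0e).symm]
        apply Finset.sum_nbij' (fun S => S.erase ℓ) (fun S => insert ℓ S)
        · intro S hS
          simp only [Finset.mem_filter, Finset.mem_powerset] at hS ⊢
          obtain ⟨hS1, hS2⟩ := hS
          constructor
          · intro x hx
            have := hS1 (Finset.mem_of_mem_erase hx)
            have := Finset.ne_of_mem_erase hx
            simp only [Finset.mem_range] at *
            omega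
          · exact Finset.erase_subset_erase _ hS2
        · intro S hS
          simp only [Finset.mem_filter, Finset.mem_powerset] at hS ⊢
          obtain ⟨hS1, hS2⟩ := hS
          constructor
          · intro x hx
            rcases Finset.mem_insert.mp hx with h | h
            · simp [h]
            · have := hS1 h
              simp only [Finset.mem_range] at *
              omega
          · intro x hx
            by_cases hxl : x = ℓ
            · simp [hxl]
            · exact Finset.mem_insert_of_mem (hS2 (Finset.mem_erase.mpr ⟨hxl, hx⟩))
        · intro S hS
          simp only [Finset.mem_filter, Finset.mem_powerset] at hS
          exact Finset.insert_erase (hS.2 hA)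
        · intro S hS
          simp only [Finset.mem_filter, Finset.mem_powerset] at hS
          apply Finset.erase_insert
          intro hc
          have := hS.1 hc
          simp at this
        · intro S hS
          simp only [Finset.mem_filter, Finset.mem_powerset] at hS
          obtain ⟨hS1, hS2⟩ := hS
          have hlS : ℓ ∈ S := hS2 hA
          have hSlt : ∀ j ∈ S.erase ℓ, j < ℓ := by
            intro j hj
            have := hS1 (Finset.mem_of_mem_erase hj)
            have := Finset.ne_of_mem_erase hj
            simp only [Finset.mem_range] at *
            omega
          -- factor at ℓ equals d ℓ
          have hbbℓ : bb B ℓ = ℓ := by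
            rw [bb_all_le B ℓ (fun b hb => by have := hB hb; simp only [Finset.mem_range] at this; omega)]
            have hmax : B.max = (ℓ : WithBot ℕ) := by
              apply le_antisymm
              · apply Finset.max_le
                intro b hb
                have := hB hb
                simp only [Finset.mem_range] at this
                exact WithBot.coe_le_coe.mpr (Nat.lt_succ_iff.mp this)
              · exact Finset.le_max hA
            rw [hmax]; rfl
          have hnxℓ : nx S (ℓ + 1) ℓ = ℓ + 1 := by
            apply nx_top
            rw [Finset.filter_eq_empty_iff]
            intro x hx
            have := hS1 hx
            simp only [Finset.mem_range] at this
            omega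
          have hfℓ : (∑ t ∈ Finset.Ico (bb B ℓ) (nx S (ℓ + 1) ℓ), (d t : ℚ)) = d ℓ := by
            rw [hbbℓ, hnxℓ, Nat.Ico_succ_singleton, Finset.sum_singleton]
          -- other factors agree
          have hfac : ∀ i ∈ S.erase ℓ,
              (∑ t ∈ Finset.Ico (bb B i) (nx S (ℓ + 1) i), (d t : ℚ))
              = ∑ t ∈ Finset.Ico (bb (B.erase ℓ) i) (nx (S.erase ℓ) ℓ i), (d t : ℚ) := by
            intro i hi
            have hiℓ : i < ℓ := hSlt i hi
            rw [bb_erase B i ℓ hiℓ]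
            have : nx S (ℓ + 1) i = nx (S.erase ℓ) ℓ i := by
              conv_lhs => rw [← Finset.insert_erase hlS]
              exact nx_insert_top (S.erase ℓ) ℓ i hSlt hiℓ
            rw [this]
          unfold trm
          rw [← Finset.mul_prod_erase S _ hlS, ← Finset.mul_prod_erase S
            (fun i => ∑ t ∈ Finset.Ico (bb B i) (nx S (ℓ + 1) i), (d t : ℚ)) hlS]
          rw [hfℓ, Finset.prod_congr rfl hfac]
          have hdℓ : (d ℓ : ℚ) ≠ 0 := by
            have := hd ℓ (by omega)
            exact_mod_cast this.ne'
          rw [mul_div_mul_left _ _ hdℓ]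
      · -- Case B : ℓ ∉ B
        have hBr : B ⊆ Finset.range ℓ := by
          intro x hx
          have := hB hx
          simp only [Finset.mem_range] at *
          rcases Nat.lt_succ_iff_lt_or_eq.mp this with h | h
          · exact h
          · exact absurd (h ▸ hx) hA
        obtain ⟨b0, hb0⟩ := Finset.max_of_mem h0
        have hb0B : b0 ∈ B := Finset.mem_of_max hb0
        have hb0ℓ : b0 < ℓ := by
          have := hBr hb0B; simpa using this
        have hble : ∀ b ∈ B, b ≤ b0 := fun b hb => Finset.le_max_of_eq hb hb0
        have hIH := IH h1 d hd' B hBr h0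
        set Sa : ℚ := ∑ t ∈ Finset.Ico b0 (ℓ + 1), (d t : ℚ) with hSa
        set Sb : ℚ := ∑ t ∈ Finset.Ico b0 ℓ, (d t : ℚ) with hSb
        have hsum : Sa = Sb + d ℓ := Finset.sum_Ico_succ_top (by omega) _
        have hSbpos : 0 < Sb := by
          apply Finset.sum_pos'
          · intro i _; positivity
          · exact ⟨b0, Finset.mem_Ico.mpr ⟨le_refl _, hb0ℓ⟩, by
              have := hd b0 (by omega); exact_mod_cast this⟩
        have hSapos : 0 < Sa := by
          rw [hsum]
          have : (0:ℚ) ≤ d ℓ := by positivity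
          linarith
        rw [← Finset.sum_filter_add_sum_filter_not
          ((Finset.range (ℓ+1)).powerset.filter (fun S => B ⊆ S)) (fun S => ℓ ∈ S)]
        -- second piece : ℓ ∉ S
        have hset2 : ((Finset.range (ℓ+1)).powerset.filter (fun S => B ⊆ S)).filter
            (fun S => ¬ ℓ ∈ S) = (Finset.range ℓ).powerset.filter (fun S => B ⊆ S) := by
          ext S
          simp only [Finset.mem_filter, Finset.mem_powerset]
          constructor
          · rintro ⟨⟨hS1, hS2⟩, hS3⟩
            refine ⟨fun x hx => ?_, hS2⟩
            have := hS1 hx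
            simp only [Finset.mem_range] at *
            rcases Nat.lt_succ_iff_lt_or_eq.mp this with h | h
            · exact h
            · exact absurd (h ▸ hx) hS3
          · rintro ⟨hS1, hS2⟩
            refine ⟨⟨fun x hx => ?_, hS2⟩, fun hc => by simpa using hS1 hc⟩
            have := hS1 hx
            simp only [Finset.mem_range] at *
            omega
        have hpart2 : ∑ S ∈ ((Finset.range (ℓ+1)).powerset.filter
              (fun S => B ⊆ S)).filter (fun S => ¬ ℓ ∈ S), trm d B S (ℓ + 1)
            = Sb / Sa := by
          rw [hset2]
          have hterm : ∀ S ∈ (Finset.range ℓ).powerset.filter (fun S => B ⊆ S),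
              trm d B S (ℓ + 1) = trm d B S ℓ * (Sb / Sa) := by
            intro S hS
            simp only [Finset.mem_filter, Finset.mem_powerset] at hS
            obtain ⟨hS1, hS2⟩ := hS
            have hSne : S.Nonempty := ⟨0, hS2 h0⟩
            set M := S.max' hSne with hM
            have hMS : M ∈ S := S.max'_mem hSne
            have hMmax : ∀ i ∈ S, i ≤ M := fun i hi => S.le_max' i hi
            have hMℓ : M < ℓ := by have := hS1 hMS; simpa using this
            -- factor at M, full version = Sa, reduced = Sb
            have hbbM : bb B M = b0 := by
              rw [bb_all_le B M (fun b hb => hMmax b (hS2 hb)), hb0]; rfl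
            have hnxM : ∀ a : ℕ, nx S a M = a := by
              intro a
              apply nx_top
              rw [Finset.filter_eq_empty_iff]
              intro x hx
              exact not_lt.mpr (hMmax x hx)
            have hfac : ∀ i ∈ S.erase M,
                (∑ t ∈ Finset.Ico (bb B i) (nx S (ℓ + 1) i), (d t : ℚ))
                = ∑ t ∈ Finset.Ico (bb B i) (nx S ℓ i), (d t : ℚ) := by
              intro i hi
              have hiM : i ≠ M := Finset.ne_of_mem_erase hi
              have hiS : i ∈ S := Finset.mem_of_mem_erase hi
              have hne : (S.filter (fun j => i < j)).Nonempty :=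
                ⟨M, Finset.mem_filter.mpr ⟨hMS, lt_of_le_of_ne (hMmax i hiS) hiM⟩⟩
              rw [nx_indep S (ℓ + 1) ℓ i hne]
            unfold trm
            rw [← Finset.mul_prod_erase S
              (fun i => ∑ t ∈ Finset.Ico (bb B i) (nx S (ℓ + 1) i), (d t : ℚ)) hMS,
              ← Finset.mul_prod_erase S
              (fun i => ∑ t ∈ Finset.Ico (bb B i) (nx S ℓ i), (d t : ℚ)) hMS]
            simp only [hbbM, hnxM, Finset.prod_congr rfl hfac]
            rw [← hSa, ← hSb]
            rw [div_mul_div_comm]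
            set N := ∏ i ∈ S, (d i : ℚ)
            set P := ∏ i ∈ S.erase M, (∑ t ∈ Finset.Ico (bb B i) (nx S ℓ i), (d t : ℚ))
            have : Sb * P * Sa = Sa * P * Sb := by ring
            rw [this, mul_div_mul_right _ _ (ne_of_gt hSbpos)]
          rw [Finset.sum_congr rfl hterm, ← Finset.sum_mul, hIH, one_mul]
        -- first piece : ℓ ∈ S
        have hpart1 : ∑ S ∈ ((Finset.range (ℓ+1)).powerset.filter
              (fun S => B ⊆ S)).filter (fun S => ℓ ∈ S), trm d B S (ℓ + 1)
            = (d ℓ : ℚ) / Sa := by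
          have hbij : ∑ S ∈ ((Finset.range (ℓ+1)).powerset.filter
                (fun S => B ⊆ S)).filter (fun S => ℓ ∈ S), trm d B S (ℓ + 1)
              = ∑ S ∈ (Finset.range ℓ).powerset.filter (fun S => B ⊆ S),
                  trm d B S ℓ * ((d ℓ : ℚ) / Sa) := by
            apply Finset.sum_nbij' (fun S => S.erase ℓ) (fun S => insert ℓ S)
            · intro S hS
              simp only [Finset.mem_filter, Finset.mem_powerset] at hS ⊢
              obtain ⟨⟨hS1, hS2⟩, hS3⟩ := hS
              constructor
              · intro x hx
                have := hS1 (Finset.mem_of_mem_erase hx)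
                have := Finset.ne_of_mem_erase hx
                simp only [Finset.mem_range] at *
                omega
              · intro x hx
                exact Finset.mem_erase.mpr ⟨by
                  intro hc; exact hA (hc ▸ hx), hS2 hx⟩
            · intro S hS
              simp only [Finset.mem_filter, Finset.mem_powerset] at hS ⊢
              obtain ⟨hS1, hS2⟩ := hS
              refine ⟨⟨fun x hx => ?_, fun x hx => Finset.mem_insert_of_mem (hS2 hx)⟩,
                Finset.mem_insert_self _ _⟩
              rcases Finset.mem_insert.mp hx with h | h
              · simp [h]
              · have := hS1 h
                simp only [Finset.mem_range] at *
                omega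
            · intro S hS
              simp only [Finset.mem_filter, Finset.mem_powerset] at hS
              exact Finset.insert_erase hS.2
            · intro S hS
              simp only [Finset.mem_filter, Finset.mem_powerset] at hS
              apply Finset.erase_insert
              intro hc
              have := hS.1 hc
              simp at this
            · intro S hS
              simp only [Finset.mem_filter, Finset.mem_powerset] at hS
              obtain ⟨⟨hS1, hS2⟩, hlS⟩ := hS
              have hSlt : ∀ j ∈ S.erase ℓ, j < ℓ := by
                intro j hj
                have := hS1 (Finset.mem_of_mem_erase hj)
                have := Finset.ne_of_mem_erase hj
                simp only [Finset.mem_range] at *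
                omega
              -- factor at ℓ equals Sa
              have hbbℓ : bb B ℓ = b0 := by
                rw [bb_all_le B ℓ (fun b hb => by
                  have := hB hb; simp only [Finset.mem_range] at this; omega), hb0]
                rfl
              have hnxℓ : nx S (ℓ + 1) ℓ = ℓ + 1 := by
                apply nx_top
                rw [Finset.filter_eq_empty_iff]
                intro x hx
                have := hS1 hx
                simp only [Finset.mem_range] at this
                omega
              have hfℓ : (∑ t ∈ Finset.Ico (bb B ℓ) (nx S (ℓ + 1) ℓ), (d t : ℚ)) = Sa := by
                rw [hbbℓ, hnxℓ, hSa]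
              have hfac : ∀ i ∈ S.erase ℓ,
                  (∑ t ∈ Finset.Ico (bb B i) (nx S (ℓ + 1) i), (d t : ℚ))
                  = ∑ t ∈ Finset.Ico (bb B i) (nx (S.erase ℓ) ℓ i), (d t : ℚ) := by
                intro i hi
                have hiℓ : i < ℓ := hSlt i hi
                have : nx S (ℓ + 1) i = nx (S.erase ℓ) ℓ i := by
                  conv_lhs => rw [← Finset.insert_erase hlS]
                  exact nx_insert_top (S.erase ℓ) ℓ i hSlt hiℓ
                rw [this]
              unfold trm
              rw [← Finset.mul_prod_erase S _ hlS, ← Finset.mul_prod_erase S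
                (fun i => ∑ t ∈ Finset.Ico (bb B i) (nx S (ℓ + 1) i), (d t : ℚ)) hlS]
              rw [hfℓ, Finset.prod_congr rfl hfac]
              rw [div_mul_div_comm, mul_comm (∏ i ∈ S.erase ℓ, (d i : ℚ)) ((d ℓ : ℚ)),
                mul_comm (∏ i ∈ S.erase ℓ,
                  (∑ t ∈ Finset.Ico (bb B i) (nx (S.erase ℓ) ℓ i), (d t : ℚ))) Sa]
          rw [hbij, ← Finset.sum_mul, hIH, one_mul]
        rw [hpart1, hpart2, ← add_div, hsum]
        rw [add_comm]
        exact div_self (ne_of_gt (hsum ▸ hSapos))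


/-- For a fixed composition `d` (given by `d : ℕ → ℕ` on `{0,...,ℓ-1}`) and a fixed
coarsening `β` of `d` (encoded by its set `B` of block-start indices in the
`d`-indexing, with `0 ∈ B`), the sum over all compositions `α` with `d ≤ α ≤ β`
(encoded by block-start sets `S` with `B ⊆ S ⊆ {0,...,ℓ-1}`) of
`(∏_j d_{i_j}) / π(α, β)` equals `1`.  Here the numerator is the product of `d`
over the block starts of `α`, and `π(α,β)` is the product over the parts of `α`
of the partial sums (within the containing part of `β`) of `d`:  for a block
start `i ∈ S` lying in the `β`-block starting at `b = max {b ∈ B | b ≤ i}`, the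
factor is `∑_{t ∈ [b, next_S(i))} d t`. -/
theorem stmt11 (ℓ : ℕ) (hℓ : 0 < ℓ) (d : ℕ → ℕ) (hd : ∀ i < ℓ, 0 < d i)
    (B : Finset ℕ) (hB : B ⊆ Finset.range ℓ) (h0 : 0 ∈ B) :
    ∑ S ∈ (Finset.range ℓ).powerset.filter (fun S => B ⊆ S),
      (∏ i ∈ S, (d i : ℚ)) /
        ∏ i ∈ S,
          (∑ t ∈ Finset.Ico (WithBot.unbotD 0 ((B.filter (fun b => b ≤ i)).max))
              (WithTop.untopD ℓ ((S.filter (fun j => i < j)).min)), (d t : ℚ)) = 1 := by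
  
  exact key_s11 ℓ hℓ d hd B hB h0
end

section
/- Let d = (d_1, ..., d_ℓ) be positive integers and Ω the set of vectors (a_1,...,a_ℓ) with 1 ≤ a_i ≤ d_1 + ... + d_i. Define a map Φ : Ω → {compositions of ℓ} recursively: given (a_1,...,a_ℓ), the last part of Φ(a) is the unique m such that d_1+...+d_{ℓ-m} < a_ℓ ≤ d_1+...+d_{ℓ-m+1}, and the remaining parts are obtained by recursing on (a_1,...,a_{ℓ-m}). Then the fibers Φ⁻¹(β), over all compositions β of ℓ, partition Ω, and for β = (β_1,...,β_k), with i_j the first index of the j-th block of β, |Φ⁻¹(β)| = (∏_j d_{i_j}) · ∏_{columns c not block-final} (d_1 + ... + d_c), so that ∑_β |Φ⁻¹(β)| = d_1(d_1+d_2)···(d_1+...+d_ℓ) = |Ω|. -/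
open scoped Classical

open Finset
namespace Stmt17Aux


/-- partial sum -/
abbrev D (d : ℕ → ℕ) (c : ℕ) : ℕ := ∑ t ∈ Finset.range c, d t

lemma D_mono (d : ℕ → ℕ) : Monotone (D d) := fun _ _ h =>
  Finset.sum_le_sum_of_subset (Finset.range_subset_range.2 h)

/-- row of value v among columns up to c -/
def row (d : ℕ → ℕ) (v c : ℕ) : ℕ := Nat.findGreatest (fun r => D d r < v) c

lemma row_le (d : ℕ → ℕ) (v c : ℕ) : row d v c ≤ c := Nat.findGreatest_le c

lemma row_lt (d : ℕ → ℕ) {v : ℕ} (c : ℕ) (hv : 0 < v) : D d (row d v c) < v := by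
  have h0 : D d 0 < v := by simpa [D] using hv
  exact Nat.findGreatest_spec (P := fun r => D d r < v) (Nat.zero_le c) h0

lemma row_ge (d : ℕ → ℕ) {v c : ℕ} (hv : v ≤ D d (c + 1)) : v ≤ D d (row d v c + 1) := by
  rcases eq_or_lt_of_le (row_le d v c) with h | h
  · rw [h]; exact hv
  · have h2 : row d v c + 1 <= c := h
    have := Nat.findGreatest_is_greatest (P := fun r => D d r < v) (n := c)
      (k := row d v c + 1) (by simp [row]) h2
    exact Nat.le_of_not_lt this

lemma row_eq (d : ℕ → ℕ) {v c m : ℕ} (hm : m ≤ c) (h1 : D d m < v) (h2 : v ≤ D d (m + 1)) :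
    row d v c = m := by
  rw [row, Nat.findGreatest_eq_iff]
  refine ⟨hm, fun _ => h1, fun n hn _ => ?_⟩
  exact not_lt.2 (le_trans h2 (D_mono d hn))

/-- the block start function -/
def startf (S : Finset ℕ) (c : ℕ) : ℕ := ((S.filter (fun j => j ≤ c)).max).unbotD 0

lemma startf_le (S : Finset ℕ) (c : ℕ) : startf S c ≤ c := by
  unfold startf
  cases h : (S.filter (fun j => j ≤ c)).max with
  | bot => simp
  | coe m =>
    have : m ∈ S.filter (fun j => j ≤ c) := Finset.mem_of_max h
    simpa using (Finset.mem_filter.1 this).2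

lemma startf_mem {S : Finset ℕ} (h0 : 0 ∈ S) (c : ℕ) : startf S c ∈ S := by
  unfold startf
  have hne : (S.filter (fun j => j ≤ c)).Nonempty :=
    ⟨0, Finset.mem_filter.2 ⟨h0, Nat.zero_le c⟩⟩
  cases h : (S.filter (fun j => j ≤ c)).max with
  | bot => simp [Finset.max_eq_bot.1 h] at hne
  | coe m =>
    have : m ∈ S.filter (fun j => j ≤ c) := Finset.mem_of_max h
    simpa using (Finset.mem_filter.1 this).1

lemma le_startf {S : Finset ℕ} {x c : ℕ} (hx : x ∈ S) (hxc : x ≤ c) : x ≤ startf S c := by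
  unfold startf
  have hmem : x ∈ S.filter (fun j => j ≤ c) := Finset.mem_filter.2 ⟨hx, hxc⟩
  cases h : (S.filter (fun j => j ≤ c)).max with
  | bot => exact absurd (Finset.max_eq_bot.1 h ▸ hmem) (by simp)
  | coe m =>
    have := Finset.le_max hmem
    rw [h] at this
    simpa using this

lemma startf_eq_of {S : Finset ℕ} {m c : ℕ} (h1 : m ∈ S) (h2 : m ≤ c)
    (h3 : ∀ x ∈ S, x ≤ c → x ≤ m) : startf S c = m := by
  refine le_antisymm ?_ (le_startf h1 h2)
  unfold startf
  cases h : (S.filter (fun j => j ≤ c)).max with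
  | bot => simp
  | coe k =>
    have hk : k ∈ S.filter (fun j => j ≤ c) := Finset.mem_of_max h
    have := Finset.mem_filter.1 hk
    simpa using h3 k this.1 (by simpa using this.2)

lemma startf_congr {S : Finset ℕ} {r c : ℕ} (hc : c < r) :
    startf (insert r S) c = startf S c := by
  unfold startf
  congr 1
  rw [Finset.filter_insert, if_neg (by omega)]

lemma startf_erase {S : Finset ℕ} {r c : ℕ} (hc : c < r) :
    startf (S.erase r) c = startf S c := by
  have he : (S.erase r).filter (fun j => j ≤ c) = S.filter (fun j => j ≤ c) := by
    ext x
    simp only [Finset.mem_filter, Finset.mem_erase]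
    constructor
    · rintro ⟨⟨_, hx⟩, hxc⟩; exact ⟨hx, hxc⟩
    · rintro ⟨hx, hxc⟩; exact ⟨⟨by omega, hx⟩, hxc⟩
  rw [startf, startf, he]

def starts (d a : ℕ → ℕ) (c : ℕ) : Finset ℕ :=
  if h : row d (a c) c = 0 then {0}
  else insert (row d (a c) c) (starts d a (row d (a c) c - 1))
  termination_by c
  decreasing_by have := row_le d (a c) c; omega

lemma starts_spec (d a : ℕ → ℕ) (c : ℕ)
    (ha : ∀ t ≤ c, 0 < a t ∧ a t ≤ D d (t + 1)) :
    0 ∈ starts d a c ∧ starts d a c ⊆ Finset.range (c + 1) ∧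
      ∀ i ≤ c, (i + 1 ∈ starts d a c ∨ i = c) →
        D d (startf (starts d a c) i) < a i ∧ a i ≤ D d (startf (starts d a c) i + 1) := by
  induction c using Nat.strong_induction_on with
  | _ c ih =>
  have hrle : row d (a c) c ≤ c := row_le d (a c) c
  have hrlt : D d (row d (a c) c) < a c := row_lt d c (ha c le_rfl).1
  have hrge : a c ≤ D d (row d (a c) c + 1) := row_ge d (ha c le_rfl).2
  rw [starts]
  by_cases h0 : row d (a c) c = 0
  · rw [dif_pos h0]
    refine ⟨Finset.mem_singleton_self 0, by simp, ?_⟩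
    intro i hi hfin
    have hi' : i = c := by
      rcases hfin with h | h
      · exact absurd (Finset.mem_singleton.1 h) (by omega)
      · exact h
    subst hi'
    have hs : startf ({0} : Finset ℕ) i = 0 :=
      startf_eq_of (Finset.mem_singleton_self 0) (Nat.zero_le i)
        (fun x hx _ => by simp_all)
    rw [hs, ← h0]
    exact ⟨hrlt, hrge⟩
  · rw [dif_neg h0]
    set r := row d (a c) c with hrdef
    obtain ⟨hT0, hTsub, hTcond⟩ := ih (r - 1) (by omega) (fun t ht => ha t (by omega))
    set T := starts d a (r - 1) with hTdef
    have hSle : ∀ x ∈ insert r T, x ≤ r := by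
      intro x hx
      rcases Finset.mem_insert.1 hx with h | h
      · omega
      · have := hTsub h; simp only [Finset.mem_range] at this; omega
    refine ⟨Finset.mem_insert.2 (Or.inr hT0), ?_, ?_⟩
    · intro x hx
      have := hSle x hx
      simp only [Finset.mem_range]; omega
    · intro i hi hfin
      by_cases hic : i = c
      · subst hic
        have hs : startf (insert r T) i = r :=
          startf_eq_of (Finset.mem_insert_self r T) hrle (fun x hx _ => hSle x hx)
        rw [hs]
        exact ⟨hrlt, hrge⟩
      · have hmem : i + 1 ∈ insert r T := by
          rcases hfin with h | h
          · exact h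
          · exact absurd h hic
        rcases Finset.mem_insert.1 hmem with h | h
        · -- i + 1 = r
          have hir : i = r - 1 := by omega
          have hlt : i < r := by omega
          rw [startf_congr hlt]
          subst hir
          exact hTcond (r - 1) le_rfl (Or.inr rfl)
        · -- i + 1 ∈ T
          have hi1 : i + 1 < r := by have := hTsub h; simp only [Finset.mem_range] at this; omega
          rw [startf_congr (by omega)]
          exact hTcond i (by omega) (Or.inl h)

lemma eq_starts (d a : ℕ → ℕ) : ∀ c S,
    (∀ t ≤ c, 0 < a t ∧ a t ≤ D d (t + 1)) →
    0 ∈ S → S ⊆ Finset.range (c + 1) →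
    (∀ i ≤ c, (i + 1 ∈ S ∨ i = c) →
      D d (startf S i) < a i ∧ a i ≤ D d (startf S i + 1)) →
    S = starts d a c := by
  intro c
  induction c using Nat.strong_induction_on with
  | _ c ih =>
  intro S ha hS0 hSsub hcond
  have hle : ∀ x ∈ S, x ≤ c := fun x hx => by
    have := hSsub hx; simp only [Finset.mem_range] at this; omega
  set m := startf S c with hm
  have hmS : m ∈ S := startf_mem hS0 c
  have hmc : m ≤ c := startf_le S c
  have hmax : ∀ x ∈ S, x ≤ m := fun x hx => le_startf hx (hle x hx)
  obtain ⟨h1, h2⟩ := hcond c le_rfl (Or.inr rfl)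
  have hrow : row d (a c) c = m := row_eq d hmc h1 h2
  rw [starts, hrow]
  by_cases h0 : m = 0
  · rw [dif_pos h0]
    ext x
    simp only [Finset.mem_singleton]
    constructor
    · intro hx; have := hmax x hx; omega
    · intro hx; subst hx; exact h0 ▸ hS0
  · rw [dif_neg h0]
    have hT : S.erase m = starts d a (m - 1) := by
      refine ih (m - 1) (by omega) _ (fun t ht => ha t (by omega))
        (Finset.mem_erase.2 ⟨by omega, hS0⟩) ?_ ?_
      · intro x hx
        obtain ⟨hne, hxS⟩ := Finset.mem_erase.1 hx
        have := hmax x hxS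
        simp only [Finset.mem_range]; omega
      · intro i hi hfin
        rw [startf_erase (by omega : i < m)]
        have : i + 1 ∈ S := by
          rcases hfin with h | h
          · exact (Finset.mem_erase.1 h).2
          · have : i + 1 = m := by omega
            exact this ▸ hmS
        exact hcond i (by omega) (Or.inl this)
    rw [← hT, Finset.insert_erase hmS]

lemma finals_prod (d : ℕ → ℕ) (ℓ : ℕ) (hℓ : 0 < ℓ) (S : Finset ℕ)
    (hS0 : 0 ∈ S) (hSsub : S ⊆ Finset.range ℓ) :
    ∏ c ∈ (Finset.range ℓ).filter (fun c => c + 1 ∈ S ∨ c = ℓ - 1), d (startf S c)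
      = ∏ i ∈ S, d i := by
  set s := (Finset.range ℓ).filter (fun c => c + 1 ∈ S ∨ c = ℓ - 1) with hs
  have hmono : ∀ c1 ∈ s, ∀ c2 ∈ s, c1 < c2 → startf S c1 < startf S c2 := by
    intro c1 h1 c2 h2 hlt
    obtain ⟨hr1, hf1⟩ := Finset.mem_filter.1 h1
    obtain ⟨hr2, hf2⟩ := Finset.mem_filter.1 h2
    simp only [Finset.mem_range] at hr1 hr2
    have h1S : c1 + 1 ∈ S := by
      rcases hf1 with h | h
      · exact h
      · omega
    calc startf S c1 ≤ c1 := startf_le S c1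
      _ < c1 + 1 := Nat.lt_succ_self c1
      _ ≤ startf S c2 := le_startf h1S (by omega)
  refine Finset.prod_nbij (startf S) ?_ ?_ ?_ ?_
  · intro c hc
    exact startf_mem hS0 c
  · intro c1 h1 c2 h2 heq
    rcases lt_trichotomy c1 c2 with h | h | h
    · exact absurd heq (Nat.ne_of_lt (hmono c1 h1 c2 h2 h))
    · exact h
    · exact absurd heq.symm (Nat.ne_of_lt (hmono c2 h2 c1 h1 h))
  · intro x hx
    simp only [Finset.coe_filter, Set.mem_setOf_eq, Finset.mem_coe] at hx ⊢
    have hxℓ : x < ℓ := by simpa using hSsub hx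
    by_cases hne : (S.filter (fun t => x < t)).Nonempty
    · set m := (S.filter (fun t => x < t)).min' hne with hm
      have hmmem := (S.filter (fun t => x < t)).min'_mem hne
      obtain ⟨hmS, hxm⟩ := Finset.mem_filter.1 hmmem
      have hmℓ : m < ℓ := by simpa using hSsub hmS
      refine ⟨m - 1, ?_, ?_⟩
      · simp only [Finset.mem_coe, hs, Finset.mem_filter, Finset.mem_range]
        exact ⟨by omega, Or.inl (by rwa [Nat.sub_add_cancel (by omega)])⟩
      · refine startf_eq_of hx (by omega) ?_
        intro y hy hyc
        by_contra hxy
        have : y ∈ S.filter (fun t => x < t) := Finset.mem_filter.2 ⟨hy, by omega⟩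
        have := (S.filter (fun t => x < t)).min'_le y this
        omega
    · refine ⟨ℓ - 1, ?_, ?_⟩
      · simp only [Finset.mem_coe, hs, Finset.mem_filter, Finset.mem_range]
        exact ⟨by omega, Or.inr trivial⟩
      · refine startf_eq_of hx (by omega) ?_
        intro y hy hyc
        by_contra hxy
        exact hne ⟨y, Finset.mem_filter.2 ⟨hy, by omega⟩⟩
  · intro c hc
    rfl

end Stmt17Aux

open Stmt17Aux

/-- The staircase decomposition of the probability space `Ω` of vectors
`(a_0, ..., a_{ℓ-1})` with `1 ≤ a_i ≤ d_0 + ... + d_i`.  Coarsenings of `d` are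
encoded by sets `S` of block-start indices (with `0 ∈ S ⊆ {0,...,ℓ-1}`);
a column `c` is block-final if `c+1 ∈ S` or `c = ℓ-1`, and `start S c` is the
block start of the block containing column `c`.  The fiber of a coarsening
consists of the vectors of `Ω` whose entry in each block-final column lies in
the row of the block start.  The fibers are pairwise disjoint, cover `Ω`, and
the fiber of `S` has cardinality `(∏_{i ∈ S} d_i) · ∏_{c free} (d_0+...+d_c)`,
whence `∑_S (∏_{i∈S} d_i) ∏_{c free} (d_0+...+d_c) = ∏_c (d_0+...+d_c) = |Ω|`. -/
theorem stmt17 (ℓ : ℕ) (hℓ : 0 < ℓ) (d : ℕ → ℕ) (hd : ∀ i < ℓ, 0 < d i) :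
    let Ω : Set (Fin ℓ → ℕ) :=
      {a | ∀ i : Fin ℓ, 1 ≤ a i ∧ a i ≤ ∑ t ∈ Finset.range (i.1 + 1), d t}
    let 𝒮 : Finset (Finset ℕ) := (Finset.range ℓ).powerset.filter (fun S => 0 ∈ S)
    let start : Finset ℕ → ℕ → ℕ := fun S c => ((S.filter (fun j => j ≤ c)).max).unbotD 0
    let isFinal : Finset ℕ → ℕ → Prop := fun S c => c + 1 ∈ S ∨ c = ℓ - 1
    let fib : Finset ℕ → Set (Fin ℓ → ℕ) := fun S =>
      {a | a ∈ Ω ∧ ∀ i : Fin ℓ, isFinal S i.1 →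
        (∑ t ∈ Finset.range (start S i.1), d t) < a i
          ∧ a i ≤ ∑ t ∈ Finset.range (start S i.1 + 1), d t}
    (∀ S ∈ 𝒮, ∀ T ∈ 𝒮, S ≠ T → Disjoint (fib S) (fib T))
    ∧ (⋃ S ∈ 𝒮, fib S) = Ω
    ∧ (∀ S ∈ 𝒮, (fib S).ncard =
        (∏ i ∈ S, d i) *
          ∏ c ∈ (Finset.range ℓ).filter (fun c => ¬ isFinal S c),
            ∑ t ∈ Finset.range (c + 1), d t)
    ∧ (∑ S ∈ 𝒮,
        (∏ i ∈ S, d i) *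
          ∏ c ∈ (Finset.range ℓ).filter (fun c => ¬ isFinal S c),
            ∑ t ∈ Finset.range (c + 1), d t)
      = ∏ c ∈ Finset.range ℓ, ∑ t ∈ Finset.range (c + 1), d t := by
  intro Ω 𝒮 start isFinal fib
  have hℓ1 : ℓ - 1 + 1 = ℓ := Nat.sub_add_cancel hℓ
  set ea : (Fin ℓ → ℕ) → ℕ → ℕ := fun a c => if h : c < ℓ then a ⟨c, h⟩ else 0 with hea
  have hS𝒮 : ∀ S, S ∈ 𝒮 ↔ 0 ∈ S ∧ S ⊆ Finset.range ℓ := by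
    intro S
    simp only [𝒮, Finset.mem_filter, Finset.mem_powerset, and_comm]
  have hΩa : ∀ a ∈ Ω, ∀ t ≤ ℓ - 1, 0 < ea a t ∧ ea a t ≤ D d (t + 1) := by
    intro a ha t ht
    have htℓ : t < ℓ := by omega
    have := ha ⟨t, htℓ⟩
    simp only [hea, dif_pos htℓ]
    exact ⟨this.1, this.2⟩
  have hkey : ∀ S ∈ 𝒮, ∀ a ∈ fib S, S = starts d (ea a) (ℓ - 1) := by
    intro S hS a hafib
    obtain ⟨h0, hsub⟩ := (hS𝒮 S).1 hS
    obtain ⟨haΩ, hcond⟩ := hafib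
    refine eq_starts d (ea a) (ℓ - 1) S (hΩa a haΩ) h0 (by rwa [hℓ1]) ?_
    intro i hi hfin
    have hiℓ : i < ℓ := by omega
    have := hcond ⟨i, hiℓ⟩ hfin
    simp only [hea, dif_pos hiℓ]
    exact this
  have hkey2 : ∀ a ∈ Ω, starts d (ea a) (ℓ - 1) ∈ 𝒮 ∧ a ∈ fib (starts d (ea a) (ℓ - 1)) := by
    intro a ha
    obtain ⟨h0, hsub, hcond⟩ := starts_spec d (ea a) (ℓ - 1) (hΩa a ha)
    rw [hℓ1] at hsub
    refine ⟨(hS𝒮 _).2 ⟨h0, hsub⟩, ha, ?_⟩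
    intro i hfin
    have := hcond i.1 (by omega : i.1 ≤ ℓ - 1) hfin
    simp only [hea, dif_pos i.2, Fin.eta] at this
    exact this
  have hdisj : ∀ S ∈ 𝒮, ∀ T ∈ 𝒮, S ≠ T → Disjoint (fib S) (fib T) := by
    intro S hS T hT hne
    rw [Set.disjoint_left]
    intro a haS haT
    exact hne ((hkey S hS a haS).trans (hkey T hT a haT).symm)
  have hcover : (⋃ S ∈ 𝒮, fib S) = Ω := by
    apply Set.Subset.antisymm
    · exact Set.iUnion₂_subset fun S hS a ha => ha.1
    · intro a ha
      exact Set.mem_iUnion₂.2 ⟨_, (hkey2 a ha).1, (hkey2 a ha).2⟩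
  set FF : Finset ℕ → Fin ℓ → Finset ℕ := fun S i =>
    if isFinal S i.1 then Finset.Ioc (D d (startf S i.1)) (D d (startf S i.1 + 1))
    else Finset.Ioc 0 (D d (i.1 + 1)) with hFF
  have hfibF : ∀ S ∈ 𝒮, fib S = ↑(Fintype.piFinset (FF S)) := by
    intro S hS
    ext a
    constructor
    · rintro ⟨haΩ, hcond⟩
      rw [Finset.mem_coe, Fintype.mem_piFinset]
      intro i
      by_cases hf : isFinal S i.1
      · simp only [hFF, if_pos hf, Finset.mem_Ioc]
        exact hcond i hf
      · simp only [hFF, if_neg hf, Finset.mem_Ioc]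
        exact ⟨(haΩ i).1, (haΩ i).2⟩
    · intro h
      rw [Finset.mem_coe, Fintype.mem_piFinset] at h
      refine ⟨fun i => ?_, fun i hf => ?_⟩
      · by_cases hf : isFinal S i.1
        · have hi := h i
          simp only [hFF, if_pos hf, Finset.mem_Ioc] at hi
          have hsle : startf S i.1 ≤ i.1 := startf_le S i.1
          have hD : D d (startf S i.1 + 1) ≤ D d (i.1 + 1) := D_mono d (by omega)
          simp only [D] at hi hD ⊢
          exact ⟨by omega, by omega⟩
        · have hi := h i
          simp only [hFF, if_neg hf, Finset.mem_Ioc] at hi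
          exact ⟨hi.1, hi.2⟩
      · have hi := h i
        simp only [hFF, if_pos hf, Finset.mem_Ioc] at hi
        exact hi
  have hcard3 : ∀ S ∈ 𝒮, (fib S).ncard =
      (∏ i ∈ S, d i) *
        ∏ c ∈ (Finset.range ℓ).filter (fun c => ¬ isFinal S c),
          ∑ t ∈ Finset.range (c + 1), d t := by
    intro S hS
    obtain ⟨h0, hsub⟩ := (hS𝒮 S).1 hS
    rw [hfibF S hS, Set.ncard_coe_finset, Fintype.card_piFinset]
    have hc : ∀ i : Fin ℓ,
        (FF S i).card = (fun c => if isFinal S c then d (startf S c) else D d (c + 1)) i.1 := by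
      intro i
      by_cases hf : isFinal S i.1
      · simp only [hFF, if_pos hf, Nat.card_Ioc, D, Finset.sum_range_succ]
        omega
      · simp only [hFF, if_neg hf, Nat.card_Ioc, Nat.sub_zero]
    rw [Finset.prod_congr rfl (fun i _ => hc i),
      Fin.prod_univ_eq_prod_range (fun c => if isFinal S c then d (startf S c) else D d (c + 1)) ℓ,
      ← Finset.prod_filter_mul_prod_filter_not (Finset.range ℓ) (fun c => isFinal S c)]
    congr 1
    · rw [Finset.prod_congr rfl (fun c hc => if_pos (Finset.mem_filter.1 hc).2)]
      exact finals_prod d ℓ hℓ S h0 hsub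
    · exact Finset.prod_congr rfl (fun c hc => if_neg (Finset.mem_filter.1 hc).2)
  have hdisjF : ∀ S ∈ 𝒮, ∀ T ∈ 𝒮, S ≠ T →
      Disjoint (Fintype.piFinset (FF S)) (Fintype.piFinset (FF T)) := by
    intro S hS T hT hne
    rw [← Finset.disjoint_coe, ← hfibF S hS, ← hfibF T hT]
    exact hdisj S hS T hT hne
  have hΩF : Ω = ↑(Fintype.piFinset (fun i : Fin ℓ => Finset.Ioc 0 (D d (i.1 + 1)))) := by
    ext a
    rw [Finset.mem_coe, Fintype.mem_piFinset]
    constructor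
    · intro h i
      rw [Finset.mem_Ioc]
      exact ⟨(h i).1, (h i).2⟩
    · intro h i
      have := h i
      rw [Finset.mem_Ioc] at this
      exact ⟨this.1, this.2⟩
  have hsum : (∑ S ∈ 𝒮,
      (∏ i ∈ S, d i) *
        ∏ c ∈ (Finset.range ℓ).filter (fun c => ¬ isFinal S c),
          ∑ t ∈ Finset.range (c + 1), d t)
      = ∏ c ∈ Finset.range ℓ, ∑ t ∈ Finset.range (c + 1), d t := by
    calc (∑ S ∈ 𝒮,
        (∏ i ∈ S, d i) *
          ∏ c ∈ (Finset.range ℓ).filter (fun c => ¬ isFinal S c),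
            ∑ t ∈ Finset.range (c + 1), d t)
        = ∑ S ∈ 𝒮, (Fintype.piFinset (FF S)).card :=
          Finset.sum_congr rfl (fun S hS => by
            rw [← hcard3 S hS, hfibF S hS, Set.ncard_coe_finset])
      _ = (𝒮.biUnion fun S => Fintype.piFinset (FF S)).card :=
          (Finset.card_biUnion (fun S hS T hT hne => hdisjF S hS T hT hne)).symm
      _ = (Fintype.piFinset fun i : Fin ℓ => Finset.Ioc 0 (D d (i.1 + 1))).card := by
          congr 1
          apply Finset.coe_injective
          rw [Finset.coe_biUnion, ← hΩF, ← hcover]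
          exact Set.iUnion_congr fun S => Set.iUnion_congr fun hS => (hfibF S hS).symm
      _ = ∏ c ∈ Finset.range ℓ, ∑ t ∈ Finset.range (c + 1), d t := by
          rw [Fintype.card_piFinset]
          rw [show (∏ i : Fin ℓ, (Finset.Ioc 0 (D d (i.1 + 1))).card)
              = ∏ i : Fin ℓ, (fun c => D d (c + 1)) i.1 from
            Finset.prod_congr rfl (fun i _ => by rw [Nat.card_Ioc, Nat.sub_zero])]
          exact Fin.prod_univ_eq_prod_range (fun c => D d (c + 1)) ℓ
  exact ⟨hdisj, hcover, hcard3, hsum⟩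
end
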